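/- arXiv:2307.10973 — 7 statements merged into one kernel-verified Lean document; each statement's English description precedes it below -/
import Mathlib

section
/- For every natural number n and all injective x, y : Fin n → ℝ, the Kemeny distance coincides with half the squared Frobenius distance between the Kemeny sign matrices: d_κ(x,y) = (1/2) · Σ_{k,l} (κ_{kl}(x) − κ_{kl}(y))². -/
open Finset

/-- The Kemeny sign matrix: entry (k,l) is √(1/2) if x k > x l, 0 if x k = x l,
and -√(1/2) if x k < x l. -/
noncomputable def kappa (n : ℕ) (x : Fin n → ℝ) : Fin n → Fin n → ℝ :=
  fun k l =>
    if x l < x k then Real.sqrt (1/2)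
    else if x k = x l then 0
    else -Real.sqrt (1/2)

/-- The Kemeny distance of x and y. -/
noncomputable def kemDist (n : ℕ) (x y : Fin n → ℝ) : ℝ :=
  ((n : ℝ) ^ 2 - (n : ℝ)) / 2 - ∑ k : Fin n, ∑ l : Fin n, kappa n x k l * kappa n y k l

lemma kappa_sq (n : ℕ) (x : Fin n → ℝ) (hx : Function.Injective x) (k l : Fin n) :
    (kappa n x k l) ^ 2 = if k = l then 0 else 1/2 := by
  unfold kappa
  by_cases h : k = l
  · subst h; simp
  · have hne : x k ≠ x l := fun hxy => h (hx hxy)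
    rcases lt_or_gt_of_ne hne with h1 | h1
    · rw [if_neg (not_lt.mpr h1.le), if_neg hne, if_neg h, neg_pow]
      simp [Real.sq_sqrt]
    · rw [if_pos h1, if_neg h]
      simp [Real.sq_sqrt]

lemma kappa_sq_sum (n : ℕ) (x : Fin n → ℝ) (hx : Function.Injective x) :
    ∑ k : Fin n, ∑ l : Fin n, (kappa n x k l) ^ 2 = ((n : ℝ) ^ 2 - (n : ℝ)) / 2 := by
  simp only [fun k l => kappa_sq n x hx k l]
  have : ∀ k : Fin n, ∑ l : Fin n, (if k = l then (0:ℝ) else 1/2)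
      = (n : ℝ)/2 - 1/2 := by
    intro k
    have : ∑ l : Fin n, (if k = l then (0:ℝ) else 1/2)
        = ∑ l : Fin n, (1/2 - if k = l then (1/2:ℝ) else 0) := by
      apply Finset.sum_congr rfl; intro l _; by_cases h : k = l <;> simp [h]
    rw [this, Finset.sum_sub_distrib, Finset.sum_ite_eq]
    simp
    ring
  rw [Finset.sum_congr rfl (fun k _ => this k)]
  simp
  ring

theorem kemDist_eq_half_frobenius_sq (n : ℕ) (x y : Fin n → ℝ)
    (hx : Function.Injective x) (hy : Function.Injective y) :
    kemDist n x y =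
      (1 / 2) * ∑ k : Fin n, ∑ l : Fin n, (kappa n x k l - kappa n y k l) ^ 2 := by
  have key : ∑ k : Fin n, ∑ l : Fin n, (kappa n x k l - kappa n y k l) ^ 2
      = (∑ k : Fin n, ∑ l : Fin n, (kappa n x k l) ^ 2)
        + (∑ k : Fin n, ∑ l : Fin n, (kappa n y k l) ^ 2)
        - 2 * ∑ k : Fin n, ∑ l : Fin n, kappa n x k l * kappa n y k l := by
    rw [← Finset.sum_add_distrib, Finset.mul_sum, ← Finset.sum_sub_distrib]
    apply Finset.sum_congr rfl; intro k _
    rw [← Finset.sum_add_distrib, Finset.mul_sum, ← Finset.sum_sub_distrib]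
    apply Finset.sum_congr rfl; intro l _
    ring
  rw [key, kappa_sq_sum n x hx, kappa_sq_sum n y hy, kemDist]
  ring
end

section
/- For every natural number n and all injective x, y : Fin n → ℝ, the Kemeny distance satisfies the identity-of-indiscernibles property on strict orderings: d_κ(x,y) = 0 if and only if x and y induce the same strict order, i.e., for all indices k, l, x k < x l ↔ y k < y l. -/
open Finset

lemma sqrt_half_mul : Real.sqrt (1/2) * Real.sqrt (1/2) = 1/2 :=
  Real.mul_self_sqrt (by norm_num)

lemma kappa_diag (n : ℕ) (x : Fin n → ℝ) (k : Fin n) : kappa n x k k = 0 := by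
  simp [kappa]

lemma kappa_term (n : ℕ) (x y : Fin n → ℝ) (hx : Function.Injective x)
    (hy : Function.Injective y) (k l : Fin n) (hkl : k ≠ l) :
    kappa n x k l * kappa n y k l =
      if (x l < x k ↔ y l < y k) then (1:ℝ)/2 else -(1/2) := by
  have hxne : x k ≠ x l := fun h => hkl (hx h)
  have hyne : y k ≠ y l := fun h => hkl (hy h)
  rcases hxne.lt_or_gt with h1 | h1 <;> rcases hyne.lt_or_gt with h2 | h2 <;>
    simp [kappa, h1, h2, h1.not_gt, h2.not_gt, h1.ne, h2.ne, h1.ne', h2.ne',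
      sqrt_half_mul] <;>
    rw [← mul_inv, Real.mul_self_sqrt (by norm_num : (0:ℝ) ≤ 2)]

theorem kemDist_eq_zero_iff_same_order (n : ℕ) (x y : Fin n → ℝ)
    (hx : Function.Injective x) (hy : Function.Injective y) :
    kemDist n x y = 0 ↔ ∀ k l, x k < x l ↔ y k < y l := by
  have hrw : kemDist n x y =
      ∑ k : Fin n, ∑ l : Fin n,
        (if k = l then 0 else (1/2 - kappa n x k l * kappa n y k l)) := by
    unfold kemDist
    have h1 : ∑ k : Fin n, ∑ l : Fin n, kappa n x k l * kappa n y k l =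
        ∑ k : Fin n, ∑ l : Fin n,
          (if k = l then 0 else kappa n x k l * kappa n y k l) := by
      refine Finset.sum_congr rfl fun k _ => Finset.sum_congr rfl fun l _ => ?_
      split_ifs with h
      · subst h; simp [kappa_diag]
      · rfl
    have h2 : ∑ k : Fin n, ∑ l : Fin n, (if k = l then (0:ℝ) else 1/2) =
        ((n : ℝ) ^ 2 - (n : ℝ)) / 2 := by
      have : ∀ k : Fin n, ∑ l : Fin n, (if k = l then (0:ℝ) else 1/2) =
          (n : ℝ) * (1/2) - 1/2 := by
        intro k
        have : ∀ l : Fin n, (if k = l then (0:ℝ) else 1/2) =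
            1/2 - (if k = l then (1:ℝ)/2 else 0) := by
          intro l; split_ifs <;> ring
        simp only [this, Finset.sum_sub_distrib, Finset.sum_const,
          Finset.card_univ, Fintype.card_fin, Finset.sum_ite_eq,
          Finset.mem_univ, if_true, nsmul_eq_mul]
      rw [Finset.sum_congr rfl (fun k _ => this k)]
      simp [Finset.sum_const, Finset.card_univ]
      ring
    rw [h1, ← h2]
    rw [← Finset.sum_sub_distrib]
    refine Finset.sum_congr rfl fun k _ => ?_
    rw [← Finset.sum_sub_distrib]
    refine Finset.sum_congr rfl fun l _ => ?_
    split_ifs <;> ring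
  have hnonneg : ∀ k ∈ (Finset.univ : Finset (Fin n)), ∀ l ∈ (Finset.univ : Finset (Fin n)),
      (0:ℝ) ≤ if k = l then 0 else (1/2 - kappa n x k l * kappa n y k l) := by
    intro k _ l _
    split_ifs with h
    · exact le_refl 0
    · rw [kappa_term n x y hx hy k l h]
      split_ifs <;> norm_num
  rw [hrw]
  rw [Finset.sum_eq_zero_iff_of_nonneg (fun k _ => Finset.sum_nonneg (hnonneg k (Finset.mem_univ k)))]
  constructor
  · intro h k l
    rcases eq_or_ne k l with rfl | hkl
    · simp
    have := h l (Finset.mem_univ l)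
    rw [Finset.sum_eq_zero_iff_of_nonneg (hnonneg l (Finset.mem_univ l))] at this
    have h2 := this k (Finset.mem_univ k)
    rw [if_neg (Ne.symm hkl), kappa_term n x y hx hy l k (Ne.symm hkl)] at h2
    by_contra hc
    rw [if_neg hc] at h2
    norm_num at h2
  · intro h k _
    apply Finset.sum_eq_zero
    intro l _
    rcases eq_or_ne k l with rfl | hkl
    · simp
    rw [if_neg hkl, kappa_term n x y hx hy k l hkl, if_pos (h l k)]
    ring
end

section
/- For every natural number n and all x, y, z : Fin n → ℝ (ties allowed), the Kemeny distance satisfies the triangle inequality: d_κ(x,z) ≤ d_κ(x,y) + d_κ(y,z). -/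
open Finset

lemma kappa_mem (n : ℕ) (x : Fin n → ℝ) (k l : Fin n) :
    kappa n x k l = Real.sqrt (1/2) ∨ kappa n x k l = 0 ∨
      kappa n x k l = -Real.sqrt (1/2) := by
  unfold kappa; split_ifs <;> tauto

lemma key_ineq (a b c : ℝ)
    (ha : a = Real.sqrt (1/2) ∨ a = 0 ∨ a = -Real.sqrt (1/2))
    (hb : b = Real.sqrt (1/2) ∨ b = 0 ∨ b = -Real.sqrt (1/2))
    (hc : c = Real.sqrt (1/2) ∨ c = 0 ∨ c = -Real.sqrt (1/2)) :
    a * b + b * c - a * c ≤ 1/2 := by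
  have hs : Real.sqrt (1/2) ^ 2 = 1/2 := Real.sq_sqrt (by norm_num)
  rcases ha with h|h|h <;> rcases hb with h'|h'|h' <;> rcases hc with h''|h''|h'' <;>
    subst h <;> subst h' <;> subst h'' <;> nlinarith [Real.sqrt_nonneg (1/2 : ℝ)]

theorem kemDist_triangle (n : ℕ) (x y z : Fin n → ℝ) :
    kemDist n x z ≤ kemDist n x y + kemDist n y z := by
  unfold kemDist
  have key : ∑ k : Fin n, ∑ l : Fin n,
      (kappa n x k l * kappa n y k l + kappa n y k l * kappa n z k l
        - kappa n x k l * kappa n z k l)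
      ≤ ∑ k : Fin n, ∑ l : Fin n, ((1:ℝ)/2 - if k = l then 1/2 else 0) := by
    refine Finset.sum_le_sum fun k _ => Finset.sum_le_sum fun l _ => ?_
    by_cases hkl : k = l
    · subst hkl; simp [kappa_diag]
    · simp only [hkl, if_false, sub_zero]
      exact key_ineq _ _ _ (kappa_mem n x k l) (kappa_mem n y k l) (kappa_mem n z k l)
  have hsum : ∑ k : Fin n, ∑ l : Fin n, ((1:ℝ)/2 - if k = l then 1/2 else 0)
      = ((n : ℝ) ^ 2 - (n : ℝ)) / 2 := by
    simp [Finset.sum_sub_distrib, Finset.sum_ite_eq, Finset.mul_sum]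
    ring
  rw [hsum] at key
  simp only [Finset.sum_sub_distrib, Finset.sum_add_distrib] at key
  linarith [key]
end

section
/- For every natural number n and all injective x, y : Fin n → ℝ, the Kemeny distance attains its maximal value n² − n if and only if x and y induce exactly reversed strict orders, i.e., for all indices k, l, x k < x l ↔ y l < y k. -/
open Finset

lemma kappa_lt (n : ℕ) (x : Fin n → ℝ) {k l : Fin n} (h : x k < x l) :
    kappa n x k l = -Real.sqrt (1/2) := by
  simp [kappa, h.ne, not_lt_of_gt h]

lemma kappa_gt (n : ℕ) (x : Fin n → ℝ) {k l : Fin n} (h : x l < x k) :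
    kappa n x k l = Real.sqrt (1/2) := by
  simp [kappa, h]

theorem kemDist_eq_diam_iff_reversed (n : ℕ) (x y : Fin n → ℝ)
    (hx : Function.Injective x) (hy : Function.Injective y) :
    kemDist n x y = (n : ℝ) ^ 2 - (n : ℝ) ↔ ∀ k l, x k < x l ↔ y l < y k := by
  classical
  have h2 : Real.sqrt (1/2) * Real.sqrt (1/2) = 1/2 := Real.mul_self_sqrt (by norm_num)
  set f : Fin n × Fin n → ℝ := fun p => kappa n x p.1 p.2 * kappa n y p.1 p.2 with hf
  have key : ∀ k l : Fin n, k ≠ l →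
      (f (k,l) = -(1/2) ∧ (x k < x l ↔ y l < y k)) ∨
      (f (k,l) = 1/2 ∧ ¬(x k < x l ↔ y l < y k)) := by
    intro k l hkl
    have hxne : x k ≠ x l := fun h => hkl (hx h)
    have hyne : y k ≠ y l := fun h => hkl (hy h)
    rcases hxne.lt_or_gt with hxlt | hxlt <;> rcases hyne.lt_or_gt with hylt | hylt
    · right
      refine ⟨?_, ?_⟩
      · simp only [hf]; rw [kappa_lt n x hxlt, kappa_lt n y hylt, neg_mul_neg, h2]
      · simp [hxlt, not_lt_of_gt hylt]
    · left
      refine ⟨?_, ?_⟩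
      · simp only [hf]; rw [kappa_lt n x hxlt, kappa_gt n y hylt, neg_mul, h2]
      · simp [hxlt, hylt]
    · left
      refine ⟨?_, ?_⟩
      · simp only [hf]; rw [kappa_gt n x hxlt, kappa_lt n y hylt, mul_neg, h2]
      · simp [not_lt_of_gt hxlt, not_lt_of_gt hylt]
    · right
      refine ⟨?_, ?_⟩
      · simp only [hf]; rw [kappa_gt n x hxlt, kappa_gt n y hylt, h2]
      · simp [not_lt_of_gt hxlt, hylt]
  -- rewrite the double sum as a sum over the off-diagonal
  have hS : ∑ k : Fin n, ∑ l : Fin n, kappa n x k l * kappa n y k l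
      = ∑ p ∈ (univ : Finset (Fin n)).offDiag, f p := by
    rw [← Finset.sum_product']
    refine (Finset.sum_subset ?_ ?_).symm
    · intro p hp
      simp [Finset.mem_product]
    · intro p hp hnp
      have hpd : p.1 = p.2 := by
        by_contra hne
        exact hnp (Finset.mem_offDiag.mpr ⟨Finset.mem_univ _, Finset.mem_univ _, hne⟩)
      simp [hf, kappa, hpd]
  have hcard : (((univ : Finset (Fin n)).offDiag.card : ℝ)) = (n : ℝ)^2 - n := by
    rw [Finset.offDiag_card]
    have hle : Fintype.card (Fin n) ≤ Fintype.card (Fin n) * Fintype.card (Fin n) := by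
      nlinarith [Nat.zero_le (Fintype.card (Fin n))]
    simp only [Finset.card_univ]
    rw [Nat.cast_sub hle]
    simp [Fintype.card_fin]
    ring
  have hsum_add : ∑ p ∈ (univ : Finset (Fin n)).offDiag, (f p + 1/2)
      = (∑ p ∈ (univ : Finset (Fin n)).offDiag, f p) + ((n : ℝ)^2 - n)/2 := by
    rw [Finset.sum_add_distrib, Finset.sum_const, nsmul_eq_mul, hcard]
    ring
  have hnonneg : ∀ p ∈ (univ : Finset (Fin n)).offDiag, 0 ≤ f p + 1/2 := by
    intro p hp
    obtain ⟨-, -, hne⟩ := Finset.mem_offDiag.mp hp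
    rcases key p.1 p.2 hne with ⟨h, -⟩ | ⟨h, -⟩ <;> rw [show f p = f (p.1, p.2) from rfl, h] <;> norm_num
  constructor
  · intro h k l
    have hsum0 : ∑ p ∈ (univ : Finset (Fin n)).offDiag, (f p + 1/2) = 0 := by
      rw [hsum_add]
      have : kemDist n x y = ((n : ℝ) ^ 2 - (n : ℝ)) / 2
          - ∑ p ∈ (univ : Finset (Fin n)).offDiag, f p := by
        rw [kemDist, hS]
      rw [this] at h
      linarith
    have hall := (Finset.sum_eq_zero_iff_of_nonneg hnonneg).mp hsum0
    rcases eq_or_ne k l with rfl | hne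
    · simp
    · have hmem : (k, l) ∈ (univ : Finset (Fin n)).offDiag :=
        Finset.mem_offDiag.mpr ⟨Finset.mem_univ _, Finset.mem_univ _, hne⟩
      have h0 := hall (k, l) hmem
      rcases key k l hne with ⟨hv, hc⟩ | ⟨hv, hc⟩
      · exact hc
      · rw [hv] at h0; norm_num at h0
  · intro h
    have hall : ∀ p ∈ (univ : Finset (Fin n)).offDiag, f p + 1/2 = 0 := by
      intro p hp
      obtain ⟨-, -, hne⟩ := Finset.mem_offDiag.mp hp
      rcases key p.1 p.2 hne with ⟨hv, -⟩ | ⟨hv, hc⟩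
      · rw [show f p = f (p.1, p.2) from rfl, hv]; ring
      · exact absurd (h p.1 p.2) hc
    have hsum0 : ∑ p ∈ (univ : Finset (Fin n)).offDiag, (f p + 1/2) = 0 :=
      Finset.sum_eq_zero hall
    rw [hsum_add] at hsum0
    rw [kemDist, hS]
    linarith
end

section
/- For every natural number n and every x : Fin n → ℝ: (i) each row sum of the Kemeny sign matrix satisfies Σ_l κ_{kl}(x) = √(1/2) · (|{l : x l < x k}| − |{l : x l > x k}|); (ii) the total sum vanishes, Σ_k Σ_l κ_{kl}(x) = 0; and (iii) if x is injective then the multiset of row sums {Σ_l κ_{kl}(x) : k} equals {√(1/2)·(2i − (n+1)) : i ∈ {1,…,n}}, a centred linear rank ordering with sum 0. -/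
open Finset

theorem kappa_row_sums (n : ℕ) (x : Fin n → ℝ) :
    (∀ k : Fin n,
        (∑ l : Fin n, kappa n x k l) =
          Real.sqrt (1/2) *
            (((Finset.univ.filter (fun l : Fin n => x l < x k)).card : ℝ) -
              ((Finset.univ.filter (fun l : Fin n => x k < x l)).card : ℝ))) ∧
      (∑ k : Fin n, ∑ l : Fin n, kappa n x k l) = 0 ∧
      (Function.Injective x →
        Finset.univ.val.map (fun k : Fin n => ∑ l : Fin n, kappa n x k l) =
          Finset.univ.val.map
            (fun i : Fin n =>
              Real.sqrt (1/2) * (2 * ((i : ℝ) + 1) - ((n : ℝ) + 1)))) := by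
  set c := Real.sqrt (1/2) with hc
  have hrow : ∀ k : Fin n,
      (∑ l : Fin n, kappa n x k l) =
        c * (((univ.filter (fun l : Fin n => x l < x k)).card : ℝ) -
          ((univ.filter (fun l : Fin n => x k < x l)).card : ℝ)) := by
    intro k
    have hpt : ∀ l, kappa n x k l =
        c * (if x l < x k then (1:ℝ) else 0) - c * (if x k < x l then (1:ℝ) else 0) := by
      intro l
      unfold kappa
      rcases lt_trichotomy (x l) (x k) with h | h | h
      · rw [if_pos h, if_pos h, if_neg (not_lt.2 h.le)]; ring
      · rw [if_neg (h ▸ lt_irrefl _), if_pos h.symm, if_neg (h ▸ lt_irrefl _),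
          if_neg (h ▸ lt_irrefl _)]; ring
      · rw [if_neg (not_lt.2 h.le), if_neg (ne_of_gt h).symm, if_neg (not_lt.2 h.le),
          if_pos h]; ring
    rw [Finset.sum_congr rfl (fun l _ => hpt l), Finset.sum_sub_distrib,
      ← Finset.mul_sum, ← Finset.mul_sum, Finset.sum_boole, Finset.sum_boole]
    ring
  have hanti : ∀ k l, kappa n x k l = - kappa n x l k := by
    intro k l; unfold kappa
    rcases lt_trichotomy (x l) (x k) with h | h | h
    · rw [if_pos h, if_neg (not_lt.2 h.le), if_neg (ne_of_gt h).symm]; ring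
    · rw [if_neg (h ▸ lt_irrefl _), if_pos h.symm, if_neg (h ▸ lt_irrefl _), if_pos h]; ring
    · rw [if_neg (not_lt.2 h.le), if_neg (ne_of_lt h), if_pos h]
  have htot : (∑ k : Fin n, ∑ l : Fin n, kappa n x k l) = 0 := by
    have h1 : (∑ k : Fin n, ∑ l : Fin n, kappa n x k l)
        = ∑ k : Fin n, ∑ l : Fin n, -(kappa n x l k) :=
      Finset.sum_congr rfl fun k _ => Finset.sum_congr rfl fun l _ => hanti k l
    have h2 : (∑ k : Fin n, ∑ l : Fin n, -(kappa n x l k))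
        = - ∑ l : Fin n, ∑ k : Fin n, kappa n x l k := by
      rw [Finset.sum_comm]
      simp
    rw [h2] at h1
    linarith
  refine ⟨hrow, htot, ?_⟩
  intro hx
  set A : Fin n → ℕ := fun k => (univ.filter (fun l : Fin n => x l < x k)).card with hA
  set B : Fin n → ℕ := fun k => (univ.filter (fun l : Fin n => x k < x l)).card with hB
  have hpart : ∀ k, A k + B k + 1 = n := by
    intro k
    have h1 := Finset.card_filter_add_card_filter_not
      (s := (univ : Finset (Fin n))) (p := fun l : Fin n => x l < x k)
    have h2 : (univ.filter fun l : Fin n => ¬ x l < x k)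
        = insert k (univ.filter fun l : Fin n => x k < x l) := by
      ext l
      simp only [Finset.mem_filter, Finset.mem_univ, true_and, Finset.mem_insert, not_lt]
      constructor
      · intro h
        rcases h.lt_or_eq with h | h
        · exact Or.inr h
        · exact Or.inl (hx h.symm)
      · rintro (rfl | h)
        · exact le_refl _
        · exact h.le
    have hk : k ∉ univ.filter fun l : Fin n => x k < x l := by simp
    rw [h2, Finset.card_insert_of_notMem hk] at h1
    simp only [Finset.card_univ, Fintype.card_fin] at h1
    simp only [hA, hB]
    omega
  have hAlt : ∀ k, A k < n := fun k => by have := hpart k; omega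
  set r : Fin n → Fin n := fun k => ⟨A k, hAlt k⟩ with hr
  have hmono : ∀ k k', x k < x k' → A k < A k' := by
    intro k k' h
    apply Finset.card_lt_card
    rw [Finset.ssubset_def]
    constructor
    · intro l hl
      simp only [Finset.mem_filter, Finset.mem_univ, true_and] at hl ⊢
      exact hl.trans h
    · intro hsub
      have hk : k ∈ univ.filter fun l : Fin n => x l < x k' := by simp [h]
      have := hsub hk
      simp at this
  have rinj : Function.Injective r := by
    intro k k' h
    have hAk : A k = A k' := by simpa [hr, Fin.mk.injEq] using h
    rcases lt_trichotomy (x k) (x k') with h' | h' | h'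
    · exact absurd hAk (hmono k k' h').ne
    · exact hx h'
    · exact absurd hAk.symm (hmono k' k h').ne
  have rbij : Function.Bijective r := Finite.injective_iff_bijective.mp rinj
  set σ : Fin n ≃ Fin n := Equiv.ofBijective r rbij with hσ
  set g : Fin n → ℝ := fun i => c * (2 * ((i : ℝ) + 1) - ((n : ℝ) + 1)) with hg
  have hfg : ∀ k, (∑ l : Fin n, kappa n x k l) = g (σ k) := by
    intro k
    have hcast : ((A k : ℝ) + B k + 1) = n := by exact_mod_cast hpart k
    have hσk : ((σ k : Fin n) : ℝ) = (A k : ℝ) := by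
      simp [hσ, Equiv.ofBijective_apply, hr]
    rw [hrow k, hg]
    simp only [hσk]
    have : ((univ.filter (fun l : Fin n => x l < x k)).card : ℝ) = (A k : ℝ) := rfl
    have hB' : ((univ.filter (fun l : Fin n => x k < x l)).card : ℝ) = (B k : ℝ) := rfl
    rw [this, hB']
    have : (A k : ℝ) - (B k : ℝ) = 2 * ((A k : ℝ) + 1) - ((n : ℝ) + 1) := by linarith
    rw [this]
  calc univ.val.map (fun k : Fin n => ∑ l : Fin n, kappa n x k l)
      = univ.val.map (g ∘ σ) := Multiset.map_congr rfl (fun k _ => hfg k)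
    _ = (univ.val.map σ).map g := by rw [Multiset.map_map]
    _ = univ.val.map g := by
        have : (univ.val.map σ) = univ.val := by
          have h := Finset.map_univ_equiv σ
          calc univ.val.map ⇑σ = (univ.map σ.toEmbedding).val := by
                rw [Finset.map_val]; rfl
            _ = univ.val := by rw [h]
        rw [this]
end

section
/- (Slutsky, additive part) Let (Ω, F, P) be a probability space, let X_m, Y_m, X : Ω → ℝ be measurable with each X_m and X having well-defined laws, let c ∈ ℝ, and suppose: (i) X_m converges in distribution to X, i.e., for every bounded continuous f : ℝ → ℝ, E[f(X_m)] → E[f(X)]; and (ii) Y_m converges in probability to c, i.e., for every ε > 0, P(|Y_m − c| ≥ ε) → 0. Then X_m + Y_m converges in distribution to X + c: for every bounded continuous f : ℝ → ℝ, E[f(X_m + Y_m)] → E[f(X + c)]. -/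
open MeasureTheory Filter
open scoped BoundedContinuousFunction Topology

lemma BoundedContinuousFunction.forall_iff_forall_continuous_bounded {α β : Type*}
    [TopologicalSpace α] [SeminormedAddCommGroup β] {p : (α → β) → Prop} :
    (∀ f : α →ᵇ β, p f) ↔ ∀ f : α → β, Continuous f → (∃ C, ∀ x, ‖f x‖ ≤ C) → p f :=
  ⟨fun h f hf ⟨C, hC⟩ => h (.ofNormedAddCommGroup f hf C hC),
    fun h f => h f f.continuous ⟨‖f‖, f.norm_coe_le_norm⟩⟩

namespace MeasureTheory

lemma tendstoInDistribution_iff_forall_tendsto_integral_comp {ι E Ω' : Type*} {Ω : ι → Type*}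
    {m : ∀ i, MeasurableSpace (Ω i)} {μ : (i : ι) → Measure (Ω i)}
    [∀ i, IsProbabilityMeasure (μ i)] {m' : MeasurableSpace Ω'} {μ' : Measure Ω'}
    [IsProbabilityMeasure μ'] [TopologicalSpace E] [MeasurableSpace E] [OpensMeasurableSpace E]
    {X : (i : ι) → Ω i → E} {Z : Ω' → E} {l : Filter ι}
    (hX : ∀ i, AEMeasurable (X i) (μ i)) (hZ : AEMeasurable Z μ') :
    TendstoInDistribution X l Z μ μ' ↔
      ∀ f : E →ᵇ ℝ, Tendsto (fun i => ∫ ω, f (X i ω) ∂μ i) l (𝓝 (∫ ω, f (Z ω) ∂μ')) := by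
  have hXf (f : E →ᵇ ℝ) (i : ι) : ∫ ω, f (X i ω) ∂μ i = ∫ x, f x ∂(μ i).map (X i) :=
    (integral_map (hX i) f.continuous.aestronglyMeasurable).symm
  have hZf (f : E →ᵇ ℝ) : ∫ ω, f (Z ω) ∂μ' = ∫ x, f x ∂μ'.map Z :=
    (integral_map hZ f.continuous.aestronglyMeasurable).symm
  simp_rw [hXf, hZf]
  exact ⟨fun h => ProbabilityMeasure.tendsto_iff_forall_integral_tendsto.1 h.tendsto,
    fun h => ⟨hX, hZ, ProbabilityMeasure.tendsto_iff_forall_integral_tendsto.2 h⟩⟩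

end MeasureTheory

theorem slutsky_add {Ω : Type*} [MeasurableSpace Ω]
    (P : Measure Ω) [IsProbabilityMeasure P]
    (X : ℕ → Ω → ℝ) (Y : ℕ → Ω → ℝ) (X₀ : Ω → ℝ) (c : ℝ)
    (hX : ∀ m, Measurable (X m)) (hY : ∀ m, Measurable (Y m))
    (hX₀ : Measurable X₀)
    (hconv : ∀ f : ℝ → ℝ, Continuous f → (∃ C, ∀ t, |f t| ≤ C) →
        Tendsto (fun m => ∫ ω, f (X m ω) ∂P) atTop (nhds (∫ ω, f (X₀ ω) ∂P)))
    (hprob : ∀ ε > (0 : ℝ),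
        Tendsto (fun m => P {ω | ε ≤ |Y m ω - c|}) atTop (nhds 0)) :
    ∀ f : ℝ → ℝ, Continuous f → (∃ C, ∀ t, |f t| ≤ C) →
      Tendsto (fun m => ∫ ω, f (X m ω + Y m ω) ∂P) atTop
        (nhds (∫ ω, f (X₀ ω + c) ∂P)) := by
  simp_rw [← Real.norm_eq_abs, ← BoundedContinuousFunction.forall_iff_forall_continuous_bounded]
    at hconv ⊢
  have hX_dist : TendstoInDistribution X atTop X₀ (fun _ => P) P :=
    (tendstoInDistribution_iff_forall_tendsto_integral_comp (fun m => (hX m).aemeasurable)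
      hX₀.aemeasurable).2 hconv
  have hY_prob : TendstoInMeasure P Y atTop (fun _ => c) :=
    tendstoInMeasure_iff_dist.2 (by simpa only [Real.dist_eq] using hprob)
  have hXY_meas m : AEMeasurable (X m + Y m) P := ((hX m).add (hY m)).aemeasurable
  exact (tendstoInDistribution_iff_forall_tendsto_integral_comp hXY_meas
    (hX₀.add_const c).aemeasurable).1
    (hX_dist.add_of_tendstoInMeasure_const hY_prob fun m => (hY m).aemeasurable)
end

section
/- (Slutsky, multiplicative part) Let (Ω, F, P) be a probability space, let X_m, Y_m, X : Ω → ℝ be measurable with each X_m and X having well-defined laws, let c ∈ ℝ, and suppose: (i) X_m converges in distribution to X, i.e., for every bounded continuous f : ℝ → ℝ, E[f(X_m)] → E[f(X)]; and (ii) Y_m converges in probability to c, i.e., for every ε > 0, P(|Y_m − c| ≥ ε) → 0. Then X_m · Y_m converges in distribution to c · X: for every bounded continuous f : ℝ → ℝ, E[f(X_m · Y_m)] → E[f(c · X)]. -/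
/-!
By Slutsky's theorem for pairs, `(X m, Y m)` converges in distribution to `(X₀, c)`; the continuous
mapping theorem for `(x, y) ↦ x * y` then gives the claim.
-/

open MeasureTheory Filter Topology BoundedContinuousFunction

namespace MeasureTheory

variable {ι Ω Ω' E : Type*} {mΩ : MeasurableSpace Ω} {mΩ' : MeasurableSpace Ω'}
  [TopologicalSpace E] {mE : MeasurableSpace E} [OpensMeasurableSpace E]
  {μ : Measure Ω} [IsProbabilityMeasure μ] {μ' : Measure Ω'} [IsProbabilityMeasure μ']
  {l : Filter ι} {X : ι → Ω → E} {Z : Ω' → E}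

lemma tendstoInDistribution_iff_forall_integral_tendsto
    (hX : ∀ i, AEMeasurable (X i) μ) (hZ : AEMeasurable Z μ') :
    TendstoInDistribution X l Z (fun _ ↦ μ) μ' ↔
      ∀ f : E →ᵇ ℝ, Tendsto (fun i ↦ ∫ ω, f (X i ω) ∂μ) l (𝓝 (∫ ω, f (Z ω) ∂μ')) := by
  have h_lim := ProbabilityMeasure.tendsto_iff_forall_integral_tendsto (F := l)
    (μs := fun i ↦ ⟨μ.map (X i), Measure.isProbabilityMeasure_map (hX i)⟩)
    (μ := ⟨μ'.map Z, Measure.isProbabilityMeasure_map hZ⟩)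
  simp only [ProbabilityMeasure.coe_mk] at h_lim
  simp_rw [integral_map (hX _) (BoundedContinuousFunction.continuous _).aestronglyMeasurable,
    integral_map hZ (BoundedContinuousFunction.continuous _).aestronglyMeasurable] at h_lim
  exact ⟨fun h ↦ h_lim.1 h.tendsto, fun h ↦ ⟨hX, hZ, h_lim.2 h⟩⟩

lemma tendstoInDistribution_iff_forall_continuous_bounded
    (hX : ∀ i, AEMeasurable (X i) μ) (hZ : AEMeasurable Z μ') :
    TendstoInDistribution X l Z (fun _ ↦ μ) μ' ↔
      ∀ f : E → ℝ, Continuous f → (∃ C, ∀ x, |f x| ≤ C) →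
        Tendsto (fun i ↦ ∫ ω, f (X i ω) ∂μ) l (𝓝 (∫ ω, f (Z ω) ∂μ')) := by
  rw [tendstoInDistribution_iff_forall_integral_tendsto hX hZ]
  exact ⟨fun h f hf ⟨C, hC⟩ ↦ h (.ofNormedAddCommGroup f hf C hC), fun h f ↦
    h f f.continuous ⟨‖f‖, f.norm_coe_le_norm⟩⟩

end MeasureTheory

theorem slutsky_mul {Ω : Type*} [MeasurableSpace Ω]
    (P : Measure Ω) [IsProbabilityMeasure P]
    (X : ℕ → Ω → ℝ) (Y : ℕ → Ω → ℝ) (X₀ : Ω → ℝ) (c : ℝ)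
    (hX : ∀ m, Measurable (X m)) (hY : ∀ m, Measurable (Y m))
    (hX₀ : Measurable X₀)
    (hconv : ∀ f : ℝ → ℝ, Continuous f → (∃ C, ∀ t, |f t| ≤ C) →
        Tendsto (fun m => ∫ ω, f (X m ω) ∂P) atTop (nhds (∫ ω, f (X₀ ω) ∂P)))
    (hprob : ∀ ε > (0 : ℝ),
        Tendsto (fun m => P {ω | ε ≤ |Y m ω - c|}) atTop (nhds 0)) :
    ∀ f : ℝ → ℝ, Continuous f → (∃ C, ∀ t, |f t| ≤ C) →
      Tendsto (fun m => ∫ ω, f (X m ω * Y m ω) ∂P) atTop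
        (nhds (∫ ω, f (c * X₀ ω) ∂P)) := by
  have hX_dist : TendstoInDistribution X atTop X₀ (fun _ ↦ P) P :=
    (tendstoInDistribution_iff_forall_continuous_bounded (fun m ↦ (hX m).aemeasurable)
      hX₀.aemeasurable).2 hconv
  have hY_prob : TendstoInMeasure P Y atTop (fun _ ↦ c) :=
    tendstoInMeasure_iff_dist.2 (by simpa only [Real.dist_eq] using hprob)
  have hXY_dist : TendstoInDistribution (fun m ω ↦ X m ω * Y m ω) atTop (fun ω ↦ c * X₀ ω)
      (fun _ ↦ P) P := by
    simp_rw [mul_comm c]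
    exact hX_dist.continuous_comp_prodMk_of_tendstoInMeasure_const
      (g := fun p : ℝ × ℝ ↦ p.1 * p.2) (by fun_prop) hY_prob (fun m ↦ (hY m).aemeasurable)
  exact (tendstoInDistribution_iff_forall_continuous_bounded
    (fun m ↦ ((hX m).mul (hY m)).aemeasurable) (by fun_prop)).1 hXY_dist
end
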